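/- Lemma (flags of a power complex). Let 𝒦 be a family of subsets of V with ∅ ∈ 𝒦. Then the map (ε, 𝒞) ↦ {C(ε) : C ∈ 𝒞} is a bijection from the set of pairs consisting of a function ε : V → N and a maximal chain 𝒞 of (𝒦, ⊆) onto the set of maximal chains of (ℱ, ⊆). In particular, every maximal chain of (ℱ, ⊆) contains exactly one singleton set {ε}, and all of its members contain ε. -/

import Mathlib

/-- The face `F(ε)` of the power complex. -/
def face (n v : ℕ) (F : Set (Fin v)) (ε : Fin v → Fin n) : Set (Fin v → Fin n) :=
  {η | ∀ i ∉ F, η i = ε i}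

/-- The power complex `n^𝒦`, as a family of subsets of `V → N`. -/
def powerComplex (n v : ℕ) (𝒦 : Set (Set (Fin v))) : Set (Set (Fin v → Fin n)) :=
  {A | ∃ F ∈ 𝒦, ∃ ε : Fin v → Fin n, A = face n v F ε}

/-- `C` is a maximal chain of the family `S` partially ordered by inclusion. -/
def IsMaxChainIn {α : Type*} (S : Set (Set α)) (C : Set (Set α)) : Prop :=
  C ⊆ S ∧ IsChain (· ⊆ ·) C ∧
    ∀ C' : Set (Set α), C' ⊆ S → IsChain (· ⊆ ·) C' → C ⊆ C' → C' = C

/-!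
Fixing a base point `ε`, the map `F ↦ F(ε)` is an order embedding (this is where `2 ≤ n` enters)
whose image is exactly the set of faces of `n^𝒦` containing `ε`, so it carries maximal chains of
`𝒦` to maximal chains of that star. A maximal chain of `n^𝒦` is a finite chain of nonempty sets,
so its members share a point `ε`; maximality then puts `{ε} = ∅(ε)` into it, and every chain
through `{ε}` lies in the star of `ε`. Hence maximal chains of `n^𝒦` are exactly the maximal
chains of the stars that contain `{ε}`, and `ε` is recovered as the unique singleton.
-/

namespace IsMaxChainIn

variable {α : Type*} {S T C : Set (Set α)}

lemma mem_of_forall_subset (hC : IsMaxChainIn S C) {A : Set α} (hA : A ∈ S)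
    (hAC : ∀ B ∈ C, A ⊆ B) : A ∈ C := by
  have hchain : IsChain (· ⊆ ·) (insert A C) :=
    hC.2.1.insert fun B hB _ => Or.inl (hAC B hB)
  rw [← hC.2.2 _ (Set.insert_subset hA hC.1) hchain (Set.subset_insert A C)]
  exact Set.mem_insert A C

lemma empty_mem (hC : IsMaxChainIn S C) (hS : ∅ ∈ S) : ∅ ∈ C :=
  hC.mem_of_forall_subset hS fun B _ => Set.empty_subset B

lemma restrict (hC : IsMaxChainIn S C) (hCT : C ⊆ T) (hTS : T ⊆ S) : IsMaxChainIn T C :=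
  ⟨hCT, hC.2.1, fun C' hC' => hC.2.2 C' (hC'.trans hTS)⟩

variable {β : Type*}

lemma image_iff (f : Set α ↪o Set β) :
    IsMaxChainIn (f '' S) (f '' C) ↔ IsMaxChainIn S C := by
  have hchain : ∀ C : Set (Set α), IsChain (· ⊆ ·) (f '' C) ↔ IsChain (· ⊆ ·) C :=
    fun _ => IsChain.image_embedding_iff
  constructor
  · rintro ⟨hsub, hch, hmax⟩
    refine ⟨(Set.image_subset_image_iff f.injective).1 hsub, (hchain C).1 hch,
      fun C' hC'S hC' hCC' => ?_⟩
    exact Set.image_injective.2 f.injective <|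
      hmax _ (Set.image_mono hC'S) ((hchain C').2 hC') (Set.image_mono hCC')
  · rintro ⟨hsub, hch, hmax⟩
    refine ⟨Set.image_mono hsub, (hchain C).2 hch, fun D hDS hD hCD => ?_⟩
    obtain ⟨C', hC'S, rfl⟩ := Set.subset_image_iff.1 hDS
    rw [Set.image_subset_image_iff f.injective] at hCD
    rw [hmax C' hC'S ((hchain C').1 hD) hCD]

end IsMaxChainIn

lemma IsChain.exists_mem_forall_mem_of_finite {α : Type*} [Nonempty α] {D : Set (Set α)}
    (hD : IsChain (· ⊆ ·) D) (hfin : D.Finite) (hmem : ∀ A ∈ D, A.Nonempty) :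
    ∃ x, ∀ A ∈ D, x ∈ A := by
  rcases D.eq_empty_or_nonempty with rfl | hne
  · exact ⟨Classical.arbitrary α, fun _ => False.elim⟩
  obtain ⟨m, hm⟩ := hfin.exists_minimal hne
  obtain ⟨x, hx⟩ := hmem m hm.prop
  refine ⟨x, fun A hA => ?_⟩
  rcases hD.total hm.prop hA with h | h
  · exact h hx
  · exact hm.2 hA h hx

lemma IsChain.mem_of_singleton_mem {α : Type*} {D : Set (Set α)} (hD : IsChain (· ⊆ ·) D)
    {x : α} (hx : {x} ∈ D) (hmem : ∀ A ∈ D, A.Nonempty) {A : Set α} (hA : A ∈ D) : x ∈ A := by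
  rcases hD.total hx hA with h | h
  · exact h rfl
  · obtain ⟨y, hy⟩ := hmem A hA
    rwa [← Set.mem_singleton_iff.1 (h hy)]

section Face

variable {n v : ℕ}

lemma mem_face_self (F : Set (Fin v)) (ε : Fin v → Fin n) : ε ∈ face n v F ε :=
  fun _ _ => rfl

lemma face_empty (ε : Fin v → Fin n) : face n v ∅ ε = {ε} := by
  ext η
  simp [face, funext_iff]

lemma face_eq_of_mem {F : Set (Fin v)} {ε η : Fin v → Fin n} (h : η ∈ face n v F ε) :
    face n v F ε = face n v F η := by
  ext ζ
  exact ⟨fun hζ i hi => (hζ i hi).trans (h i hi).symm, fun hζ i hi => (hζ i hi).trans (h i hi)⟩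

lemma face_subset_face_iff (hn : 2 ≤ n) {F G : Set (Fin v)} {ε : Fin v → Fin n} :
    face n v F ε ⊆ face n v G ε ↔ F ⊆ G := by
  refine ⟨fun h i hiF => ?_, fun h η hη i hiG => hη i (fun hiF => hiG (h hiF))⟩
  by_contra hiG
  have : Nontrivial (Fin n) := Fin.nontrivial_iff_two_le.2 hn
  obtain ⟨j, hj⟩ := exists_ne (ε i)
  have hmem : Function.update ε i j ∈ face n v F ε := fun k hk =>
    Function.update_of_ne (fun hki : k = i => hk (hki ▸ hiF)) j ε
  exact hj (by simpa using h hmem i hiG)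

def faceEmbedding (hn : 2 ≤ n) (ε : Fin v → Fin n) : Set (Fin v) ↪o Set (Fin v → Fin n) :=
  OrderEmbedding.ofMapLEIff (fun F => face n v F ε) fun _ _ => face_subset_face_iff hn

lemma coe_faceEmbedding (hn : 2 ≤ n) (ε : Fin v → Fin n) :
    ⇑(faceEmbedding hn ε) = fun F => face n v F ε :=
  rfl

lemma face_mem_powerComplex {𝒦 : Set (Set (Fin v))} {F : Set (Fin v)} (hF : F ∈ 𝒦)
    (ε : Fin v → Fin n) : face n v F ε ∈ powerComplex n v 𝒦 :=
  ⟨F, hF, ε, rfl⟩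

lemma nonempty_of_mem_powerComplex {𝒦 : Set (Set (Fin v))} {A : Set (Fin v → Fin n)}
    (hA : A ∈ powerComplex n v 𝒦) : A.Nonempty := by
  obtain ⟨F, -, ε, rfl⟩ := hA
  exact ⟨ε, mem_face_self F ε⟩

lemma mem_image_face_of_mem_powerComplex {𝒦 : Set (Set (Fin v))} {A : Set (Fin v → Fin n)}
    (hA : A ∈ powerComplex n v 𝒦) {ε : Fin v → Fin n} (hε : ε ∈ A) :
    A ∈ (fun F => face n v F ε) '' 𝒦 := by
  obtain ⟨F, hF, η, rfl⟩ := hA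
  exact ⟨F, hF, (face_eq_of_mem hε).symm⟩

lemma singleton_mem_image_face {C : Set (Set (Fin v))} (hC : ∅ ∈ C) (ε : Fin v → Fin n) :
    {ε} ∈ (fun F => face n v F ε) '' C :=
  ⟨∅, hC, face_empty ε⟩

lemma eq_of_singleton_mem_image_face {C : Set (Set (Fin v))} {ε η : Fin v → Fin n}
    (h : {η} ∈ (fun F => face n v F ε) '' C) : ε = η := by
  obtain ⟨F, -, hF⟩ := h
  exact Set.mem_singleton_iff.1 (hF ▸ mem_face_self F ε)

end Face

section PowerComplex

variable {n v : ℕ} {𝒦 : Set (Set (Fin v))}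

lemma image_face_subset_powerComplex (ε : Fin v → Fin n) :
    (fun F => face n v F ε) '' 𝒦 ⊆ powerComplex n v 𝒦 := by
  rintro _ ⟨F, hF, rfl⟩
  exact face_mem_powerComplex hF ε

lemma subset_image_face_of_singleton_mem {D : Set (Set (Fin v → Fin n))}
    (hD𝒦 : D ⊆ powerComplex n v 𝒦) (hD : IsChain (· ⊆ ·) D) {ε : Fin v → Fin n} (hε : {ε} ∈ D) :
    D ⊆ (fun F => face n v F ε) '' 𝒦 := fun _ hA =>
  mem_image_face_of_mem_powerComplex (hD𝒦 hA) <|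
    hD.mem_of_singleton_mem hε (fun _ hB => nonempty_of_mem_powerComplex (hD𝒦 hB)) hA

lemma isMaxChainIn_powerComplex_iff {D : Set (Set (Fin v → Fin n))} {ε : Fin v → Fin n}
    (hε : {ε} ∈ D) :
    IsMaxChainIn (powerComplex n v 𝒦) D ↔ IsMaxChainIn ((fun F => face n v F ε) '' 𝒦) D := by
  refine ⟨fun hD => hD.restrict (subset_image_face_of_singleton_mem hD.1 hD.2.1 hε)
    (image_face_subset_powerComplex ε), fun hD => ?_⟩
  refine ⟨hD.1.trans (image_face_subset_powerComplex ε), hD.2.1, fun D' hD'𝒦 hD' hDD' => ?_⟩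
  exact hD.2.2 D' (subset_image_face_of_singleton_mem hD'𝒦 hD' (hDD' hε)) hD' hDD'

lemma isMaxChainIn_powerComplex_image_face_iff (hn : 2 ≤ n) {C : Set (Set (Fin v))} (hC : ∅ ∈ C)
    (ε : Fin v → Fin n) :
    IsMaxChainIn (powerComplex n v 𝒦) ((fun F => face n v F ε) '' C) ↔ IsMaxChainIn 𝒦 C := by
  rw [isMaxChainIn_powerComplex_iff (singleton_mem_image_face hC ε), ← coe_faceEmbedding hn,
    IsMaxChainIn.image_iff]

lemma IsMaxChainIn.exists_singleton_mem_of_powerComplex [NeZero n] (hempty : ∅ ∈ 𝒦)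
    {D : Set (Set (Fin v → Fin n))} (hD : IsMaxChainIn (powerComplex n v 𝒦) D) :
    ∃ ε, {ε} ∈ D := by
  obtain ⟨ε, hε⟩ := hD.2.1.exists_mem_forall_mem_of_finite D.toFinite
    fun A hA => nonempty_of_mem_powerComplex (hD.1 hA)
  refine ⟨ε, hD.mem_of_forall_subset ?_ fun A hA => Set.singleton_subset_iff.2 (hε A hA)⟩
  exact face_empty ε ▸ face_mem_powerComplex hempty ε

lemma IsMaxChainIn.exists_eq_image_face_of_powerComplex (hn : 2 ≤ n) (hempty : ∅ ∈ 𝒦)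
    {D : Set (Set (Fin v → Fin n))} (hD : IsMaxChainIn (powerComplex n v 𝒦) D) :
    ∃ (ε : Fin v → Fin n) (C : Set (Set (Fin v))), IsMaxChainIn 𝒦 C ∧
      D = (fun F => face n v F ε) '' C := by
  have : NeZero n := ⟨by omega⟩
  obtain ⟨ε, hε⟩ := hD.exists_singleton_mem_of_powerComplex hempty
  obtain ⟨C, -, rfl⟩ := Set.subset_image_iff.1 (subset_image_face_of_singleton_mem hD.1 hD.2.1 hε)
  have hC : ∅ ∈ C := by
    rw [← face_empty, ← coe_faceEmbedding hn] at hε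
    exact (faceEmbedding hn ε).injective.mem_set_image.1 hε
  exact ⟨ε, C, (isMaxChainIn_powerComplex_image_face_iff hn hC ε).1 hD, rfl⟩

end PowerComplex

theorem flags_of_powerComplex_general (n v : ℕ) (hn : 2 ≤ n)
    (𝒦 : Set (Set (Fin v))) (hempty : ∅ ∈ 𝒦) :
    (∀ (ε : Fin v → Fin n) (𝒞 : Set (Set (Fin v))), IsMaxChainIn 𝒦 𝒞 →
      IsMaxChainIn (powerComplex n v 𝒦) ((fun F => face n v F ε) '' 𝒞)) ∧
    (∀ (ε ε' : Fin v → Fin n) (𝒞 𝒞' : Set (Set (Fin v))),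
      IsMaxChainIn 𝒦 𝒞 → IsMaxChainIn 𝒦 𝒞' →
      (fun F => face n v F ε) '' 𝒞 = (fun F => face n v F ε') '' 𝒞' → ε = ε' ∧ 𝒞 = 𝒞') ∧
    (∀ D : Set (Set (Fin v → Fin n)), IsMaxChainIn (powerComplex n v 𝒦) D →
      ∃ (ε : Fin v → Fin n) (𝒞 : Set (Set (Fin v))), IsMaxChainIn 𝒦 𝒞 ∧
        D = (fun F => face n v F ε) '' 𝒞) ∧
    (∀ D : Set (Set (Fin v → Fin n)), IsMaxChainIn (powerComplex n v 𝒦) D →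
      ∃! ε : Fin v → Fin n, {ε} ∈ D ∧ ∀ A ∈ D, ε ∈ A) := by
  refine ⟨fun ε 𝒞 h𝒞 => (isMaxChainIn_powerComplex_image_face_iff hn (h𝒞.empty_mem hempty) ε).2 h𝒞,
    ?_, fun D hD => hD.exists_eq_image_face_of_powerComplex hn hempty, ?_⟩
  · intro ε ε' 𝒞 𝒞' h𝒞 _ himg
    obtain rfl : ε' = ε :=
      eq_of_singleton_mem_image_face (himg ▸ singleton_mem_image_face (h𝒞.empty_mem hempty) ε)
    exact ⟨rfl, Set.image_injective.2 (faceEmbedding hn ε').injective himg⟩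
  · intro D hD
    obtain ⟨ε, 𝒞, h𝒞, rfl⟩ := hD.exists_eq_image_face_of_powerComplex hn hempty
    refine ⟨ε, ⟨singleton_mem_image_face (h𝒞.empty_mem hempty) ε, ?_⟩,
      fun η hη => (eq_of_singleton_mem_image_face hη.1).symm⟩
    rintro _ ⟨F, -, rfl⟩
    exact mem_face_self F ε

/-- Flags of a power complex: the map `(ε, 𝒞) ↦ {C(ε) : C ∈ 𝒞}` is a bijection from pairs
consisting of a point `ε : V → N` and a maximal chain `𝒞` of `(𝒦, ⊆)` onto the maximal chains
of the power complex `(ℱ, ⊆)`.  In particular, every maximal chain of `(ℱ, ⊆)` contains exactly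
one singleton `{ε}`, and all of its members contain `ε`. -/
theorem flags_of_powerComplex (n v : ℕ) (hn : 2 ≤ n) (hv : 1 ≤ v)
    (𝒦 : Set (Set (Fin v))) (hempty : ∅ ∈ 𝒦) :
    (∀ (ε : Fin v → Fin n) (𝒞 : Set (Set (Fin v))), IsMaxChainIn 𝒦 𝒞 →
      IsMaxChainIn (powerComplex n v 𝒦) ((fun F => face n v F ε) '' 𝒞)) ∧
    (∀ (ε ε' : Fin v → Fin n) (𝒞 𝒞' : Set (Set (Fin v))),
      IsMaxChainIn 𝒦 𝒞 → IsMaxChainIn 𝒦 𝒞' →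
      (fun F => face n v F ε) '' 𝒞 = (fun F => face n v F ε') '' 𝒞' → ε = ε' ∧ 𝒞 = 𝒞') ∧
    (∀ D : Set (Set (Fin v → Fin n)), IsMaxChainIn (powerComplex n v 𝒦) D →
      ∃ (ε : Fin v → Fin n) (𝒞 : Set (Set (Fin v))), IsMaxChainIn 𝒦 𝒞 ∧
        D = (fun F => face n v F ε) '' 𝒞) ∧
    (∀ D : Set (Set (Fin v → Fin n)), IsMaxChainIn (powerComplex n v 𝒦) D →
      ∃! ε : Fin v → Fin n, {ε} ∈ D ∧ ∀ A ∈ D, ε ∈ A) :=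
  flags_of_powerComplex_general n v hn 𝒦 hempty
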